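/- With the hypotheses of the previous statement, and assuming additionally that each S_t : N → X is C² with ‖d²_x S_t‖ ≤ M e^{βt} for all x ∈ N, t ≥ 0, the Finsler norm satisfies the Lipschitz estimate |⦀ξ⦀_x − ⦀ξ⦀_y| ≤ M ‖x − y‖ ‖ξ‖ for all x, y ∈ N (with the segment [y,x] in N) and ξ ∈ X. -/
import Mathlib


open Real

/-- If in addition each `S_t` is `C²` with `‖d²_x S_t‖ ≤ M e^{βt}`, the Finsler norm
`⦀ξ⦀_x := sup_{t ≥ 0} ‖e^{−βt}(d_x S_t)(ξ)‖` is Lipschitz in the base point: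
`|⦀ξ⦀_x − ⦀ξ⦀_y| ≤ M ‖x − y‖ ‖ξ‖` for `x, y ∈ N` with the segment `[y,x] ⊆ N`. -/
theorem stmt11 {X : Type*} [NormedAddCommGroup X] [NormedSpace ℝ X]
    (N : Set X) (hN : IsOpen N) (S : ℝ → X → X) (M β : ℝ) (hM : 0 < M) (hβ : 0 < β)
    (hS0 : ∀ x : X, S 0 x = x)
    (hSsemi : ∀ s t : ℝ, 0 ≤ s → 0 ≤ t → ∀ x ∈ N, S (s + t) x = S s (S t x))
    (hSmap : ∀ t : ℝ, 0 ≤ t → ∀ x ∈ N, S t x ∈ N)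
    (hdiff : ∀ t : ℝ, 0 ≤ t → ∀ x : X, DifferentiableAt ℝ (S t) x)
    (hdiff2 : ∀ t : ℝ, 0 ≤ t → ∀ x : X, DifferentiableAt ℝ (fderiv ℝ (S t)) x)
    (hbound : ∀ t : ℝ, 0 ≤ t → ∀ x ∈ N, ‖fderiv ℝ (S t) x‖ ≤ M * Real.exp (β * t))
    (hbound2 : ∀ t : ℝ, 0 ≤ t → ∀ x ∈ N,
      ‖fderiv ℝ (fderiv ℝ (S t)) x‖ ≤ M * Real.exp (β * t)) :
    ∀ x ∈ N, ∀ y ∈ N, segment ℝ y x ⊆ N → ∀ ξ : X,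
      |sSup {r : ℝ | ∃ t : ℝ, 0 ≤ t ∧ r = Real.exp (-β * t) * ‖fderiv ℝ (S t) x ξ‖} -
        sSup {r : ℝ | ∃ t : ℝ, 0 ≤ t ∧ r = Real.exp (-β * t) * ‖fderiv ℝ (S t) y ξ‖}| ≤
      M * ‖x - y‖ * ‖ξ‖ := by
  intro x hx y hy hseg ξ
  set A := {r : ℝ | ∃ t : ℝ, 0 ≤ t ∧ r = Real.exp (-β * t) * ‖fderiv ℝ (S t) x ξ‖} with hA
  set B := {r : ℝ | ∃ t : ℝ, 0 ≤ t ∧ r = Real.exp (-β * t) * ‖fderiv ℝ (S t) y ξ‖} with hB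
  set C := M * ‖x - y‖ * ‖ξ‖ with hCdef
  have hC0 : 0 ≤ C := by positivity
  -- key pointwise estimate via the mean value inequality
  have key : ∀ t : ℝ, 0 ≤ t →
      ‖fderiv ℝ (S t) x ξ - fderiv ℝ (S t) y ξ‖ ≤ Real.exp (β * t) * C := by
    intro t ht
    have hmvt : ‖fderiv ℝ (S t) x - fderiv ℝ (S t) y‖ ≤ M * Real.exp (β * t) * ‖x - y‖ :=
      (convex_segment y x).norm_image_sub_le_of_norm_fderiv_le
        (fun z _ => hdiff2 t ht z)
        (fun z hz => hbound2 t ht z (hseg hz))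
        (left_mem_segment ℝ y x) (right_mem_segment ℝ y x)
    calc ‖fderiv ℝ (S t) x ξ - fderiv ℝ (S t) y ξ‖
        = ‖(fderiv ℝ (S t) x - fderiv ℝ (S t) y) ξ‖ := by
          simp [ContinuousLinearMap.sub_apply]
      _ ≤ ‖fderiv ℝ (S t) x - fderiv ℝ (S t) y‖ * ‖ξ‖ :=
          ContinuousLinearMap.le_opNorm _ _
      _ ≤ M * Real.exp (β * t) * ‖x - y‖ * ‖ξ‖ :=
          mul_le_mul_of_nonneg_right hmvt (norm_nonneg _)
      _ = Real.exp (β * t) * C := by rw [hCdef]; ring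
  have keypt : ∀ t : ℝ, 0 ≤ t →
      Real.exp (-β * t) * ‖fderiv ℝ (S t) x ξ‖ ≤
        Real.exp (-β * t) * ‖fderiv ℝ (S t) y ξ‖ + C ∧
      Real.exp (-β * t) * ‖fderiv ℝ (S t) y ξ‖ ≤
        Real.exp (-β * t) * ‖fderiv ℝ (S t) x ξ‖ + C := by
    intro t ht
    have habs : |‖fderiv ℝ (S t) x ξ‖ - ‖fderiv ℝ (S t) y ξ‖| ≤ Real.exp (β * t) * C :=
      (abs_norm_sub_norm_le _ _).trans (key t ht)
    have h1 := abs_le.mp habs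
    have he : Real.exp (-β * t) * Real.exp (β * t) = 1 := by
      rw [← Real.exp_add]; ring_nf; exact Real.exp_zero
    have hep : 0 < Real.exp (-β * t) := Real.exp_pos _
    constructor <;> nlinarith [h1.1, h1.2, hep.le]
  -- boundedness and nonemptiness of the sup sets
  have hbddA : BddAbove A := by
    refine ⟨M * ‖ξ‖, ?_⟩
    rintro r ⟨t, ht, rfl⟩
    have := (ContinuousLinearMap.le_opNorm (fderiv ℝ (S t) x) ξ).trans
      (mul_le_mul_of_nonneg_right (hbound t ht x hx) (norm_nonneg ξ))
    have he : Real.exp (-β * t) * Real.exp (β * t) = 1 := by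
      rw [← Real.exp_add]; ring_nf; exact Real.exp_zero
    calc Real.exp (-β * t) * ‖fderiv ℝ (S t) x ξ‖
        ≤ Real.exp (-β * t) * (M * Real.exp (β * t) * ‖ξ‖) :=
          mul_le_mul_of_nonneg_left this (Real.exp_pos _).le
      _ = M * ‖ξ‖ := by linear_combination M * ‖ξ‖ * he
  have hbddB : BddAbove B := by
    refine ⟨M * ‖ξ‖, ?_⟩
    rintro r ⟨t, ht, rfl⟩
    have := (ContinuousLinearMap.le_opNorm (fderiv ℝ (S t) y) ξ).trans
      (mul_le_mul_of_nonneg_right (hbound t ht y hy) (norm_nonneg ξ))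
    have he : Real.exp (-β * t) * Real.exp (β * t) = 1 := by
      rw [← Real.exp_add]; ring_nf; exact Real.exp_zero
    calc Real.exp (-β * t) * ‖fderiv ℝ (S t) y ξ‖
        ≤ Real.exp (-β * t) * (M * Real.exp (β * t) * ‖ξ‖) :=
          mul_le_mul_of_nonneg_left this (Real.exp_pos _).le
      _ = M * ‖ξ‖ := by linear_combination M * ‖ξ‖ * he
  have hAne : A.Nonempty := ⟨_, 0, le_refl 0, rfl⟩
  have hBne : B.Nonempty := ⟨_, 0, le_refl 0, rfl⟩
  have h0B : 0 ≤ sSup B := by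
    obtain ⟨r, t, ht, hr⟩ := hBne
    have : 0 ≤ r := by rw [hr]; positivity
    exact this.trans (le_csSup hbddB ⟨t, ht, hr⟩)
  have h0A : 0 ≤ sSup A := by
    obtain ⟨r, t, ht, hr⟩ := hAne
    have : 0 ≤ r := by rw [hr]; positivity
    exact this.trans (le_csSup hbddA ⟨t, ht, hr⟩)
  rw [abs_sub_le_iff]
  constructor
  · rw [sub_le_iff_le_add]
    apply Real.sSup_le _ (by linarith)
    rintro r ⟨t, ht, rfl⟩
    have := (keypt t ht).1
    have hle : Real.exp (-β * t) * ‖fderiv ℝ (S t) y ξ‖ ≤ sSup B :=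
      le_csSup hbddB ⟨t, ht, rfl⟩
    linarith
  · rw [sub_le_iff_le_add]
    apply Real.sSup_le _ (by linarith)
    rintro r ⟨t, ht, rfl⟩
    have := (keypt t ht).2
    have hle : Real.exp (-β * t) * ‖fderiv ℝ (S t) x ξ‖ ≤ sSup A :=
      le_csSup hbddA ⟨t, ht, rfl⟩
    linarith
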